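/- arXiv:2209.14938 — 2 statements merged into one kernel-verified Lean document; each statement's English description precedes it below -/
import Mathlib

section
/- In a tree of transitive tournaments with a unique source, along the unique shortest directed path with node sequence v1, v2, ..., vn (n ≥ 2), every node vr with 2 ≤ r ≤ n-1 is the source of the maximal transitive tournament containing the edge (vr, v_{r+1}). -/
open scoped Classical

universe u

variable {V : Type u}

/-- The undirected skeleton of a directed graph given by edge relation `E`. -/
def skeleton (E : V → V → Prop) : SimpleGraph V where
  Adj u v := u ≠ v ∧ (E u v ∨ E v u)
  symm := ⟨fun u v h => ⟨h.1.symm, h.2.symm⟩⟩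
  loopless := ⟨fun v h => h.1 rfl⟩

/-- A set of vertices is biconnected if the induced subgraph is connected and
remains connected after removal of any single vertex. -/
def IsBiconnected (G : SimpleGraph V) (S : Set V) : Prop :=
  (G.induce S).Connected ∧ ∀ v ∈ S, (G.induce (S \ {v})).Connected

/-- A block graph: every maximal biconnected set of vertices is a clique. -/
def IsBlockGraph (G : SimpleGraph V) : Prop :=
  ∀ S : Set V, IsBiconnected G S →
    (∀ S', S ⊆ S' → IsBiconnected G S' → S = S') → G.IsClique S

/-- A tree of transitive tournaments: a (finite) directed acyclic graph that is
connected and whose skeleton is a block graph. -/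
def IsTTT (E : V → V → Prop) : Prop :=
  (∀ v, ¬ Relation.TransGen E v v) ∧ (skeleton E).Connected ∧ IsBlockGraph (skeleton E)

/-- `l` is the full vertex sequence of a directed path from `a` to `b`. -/
def IsDirSeq (E : V → V → Prop) (a b : V) (l : List V) : Prop :=
  l.Chain' E ∧ l.head? = some a ∧ l.getLast? = some b

/-- A maximal clique of a simple graph. -/
def IsMaxClique (G : SimpleGraph V) (S : Set V) : Prop :=
  G.IsClique S ∧ ∀ S', G.IsClique S' → S ⊆ S' → S = S'

/-- The product of the edge weights along a vertex sequence. -/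
def prodAlong (c : V → V → ℝ) : List V → ℝ
  | [] => 1
  | [_] => 1
  | a :: b :: rest => c a b * prodAlong c (b :: rest)

/-! Suppose some `w` in the tournament of `(vᵣ, vᵣ₊₁)` had an edge into `vᵣ`; by acyclicity also
`w → vᵣ₊₁`. Both `vᵣ₋₁` and `w` descend from the source, and no ancestor of either is `vᵣ` or
`vᵣ₊₁`, so the skeleton contains a path from `vᵣ₋₁` to `w` avoiding `vᵣ` and `vᵣ₊₁`. Closing it
through `vᵣ` gives a cycle, and `vᵣ₊₁`, adjacent to both `vᵣ` and `w`, keeps the vertex set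
biconnected. In a block graph a biconnected set is a clique, so `vᵣ₋₁` and `vᵣ₊₁` are adjacent:
either `vᵣ₋₁ → vᵣ₊₁` shortcuts the shortest path, or `vᵣ₊₁ → vᵣ₋₁` closes a directed cycle. -/

open Relation

section Digraph

variable {E : V → V → Prop}

lemma skeleton_adj_of_rel (hirr : ∀ v, ¬ E v v) {x y : V} (h : E x y) : (skeleton E).Adj x y :=
  ⟨fun hxy => hirr y (hxy ▸ h), Or.inl h⟩

lemma reflTransGen_of_unique_source [Finite V] (hacyc : ∀ v, ¬ TransGen E v v) {u : V}
    (hu : ∀ v, (∀ w, ¬ E w v) → v = u) (v : V) : ReflTransGen E u v := by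
  have : IsTrans V (TransGen E) := ⟨fun _ _ _ => TransGen.trans⟩
  have : Std.Irrefl (TransGen E) := ⟨hacyc⟩
  have hwf : WellFounded E :=
    (Finite.wellFounded_of_trans_of_irrefl (TransGen E)).mono fun _ _ => TransGen.single
  induction v using hwf.induction with
  | _ v ih =>
    by_cases hv : ∀ w, ¬ E w v
    · rw [hu v hv]
    · obtain ⟨w, hw⟩ := not_forall_not.mp hv
      exact (ih w hw).tail hw

lemma reachable_induce_skeleton_of_reflTransGen (hirr : ∀ v, ¬ E v v) {T : Set V} {x y : V}
    (h : ReflTransGen E x y) (hT : ∀ z, ReflTransGen E z y → z ∈ T) :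
    ((skeleton E).induce T).Reachable ⟨x, hT x h⟩ ⟨y, hT y .refl⟩ := by
  induction h using ReflTransGen.head_induction_on with
  | refl => rfl
  | head hxc hcy ih =>
    have hadj : ((skeleton E).induce T).Adj ⟨_, hT _ (.head hxc hcy)⟩ ⟨_, hT _ hcy⟩ :=
      skeleton_adj_of_rel hirr hxc
    exact hadj.reachable.trans ih

end Digraph

section Biconnected

variable {G : SimpleGraph V}

lemma reachable_induce_of_isChain {S : Set V} {P : List V} (hP : P.IsChain G.Adj)
    (hPS : ∀ z ∈ P, z ∈ S) {x y : V} (hx : x ∈ P) (hy : y ∈ P) :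
    (G.induce S).Reachable ⟨x, hPS x hx⟩ ⟨y, hPS y hy⟩ := by
  induction P generalizing x y with
  | nil => cases hx
  | cons a P ih =>
    have hhead : ∀ z (hz : z ∈ a :: P),
        (G.induce S).Reachable ⟨a, hPS a List.mem_cons_self⟩ ⟨z, hPS z hz⟩ := by
      intro z hz
      rcases List.mem_cons.mp hz with rfl | hz
      · rfl
      · cases P with
        | nil => cases hz
        | cons b P =>
          have hab : (G.induce S).Adj ⟨a, hPS a List.mem_cons_self⟩ ⟨b, hPS b (by simp)⟩ :=
            (List.isChain_cons_cons.mp hP).1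
          exact hab.reachable.trans
            (ih hP.tail (fun z hz => hPS z (.tail _ hz)) List.mem_cons_self hz)
    exact (hhead x hx).symm.trans (hhead y hy)

lemma connected_induce_insert {S : Set V} (hS : (G.induce S).Connected) {a v : V} (ha : a ∈ S)
    (hva : G.Adj v a) : (G.induce (insert v S)).Connected := by
  rw [SimpleGraph.connected_iff_exists_forall_reachable]
  refine ⟨⟨v, Set.mem_insert _ _⟩, ?_⟩
  rintro ⟨y, rfl | hy⟩
  · rfl
  · have hva' : (G.induce (insert v S)).Adj ⟨v, Set.mem_insert _ _⟩
        ⟨a, Set.mem_insert_of_mem _ ha⟩ := hva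
    exact hva'.reachable.trans <|
      (hS.preconnected ⟨a, ha⟩ ⟨y, hy⟩).map (G.induceHomOfLE (Set.subset_insert _ _)).toHom

lemma IsBiconnected.insert {S : Set V} (hS : IsBiconnected G S) {v a b : V} (hv : v ∉ S)
    (ha : a ∈ S) (hb : b ∈ S) (hab : a ≠ b) (hva : G.Adj v a) (hvb : G.Adj v b) :
    IsBiconnected G (insert v S) := by
  refine ⟨connected_induce_insert hS.1 ha hva, ?_⟩
  rintro x (rfl | hx)
  · rw [Set.insert_sdiff_self_of_notMem hv]
    exact hS.1
  · rw [Set.insert_sdiff_of_notMem _ (show v ∉ ({x} : Set V) from fun h => hv (h ▸ hx))]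
    by_cases hxa : a = x
    · exact connected_induce_insert (hS.2 x hx) ⟨hb, fun hbx : b = x => hab (hxa ▸ hbx.symm)⟩
        hvb
    · exact connected_induce_insert (hS.2 x hx) ⟨ha, hxa⟩ hva

lemma isBiconnected_insert_of_isChain {P : List V} {s t h : V} (hP : P.IsChain G.Adj)
    (hnd : P.Nodup) (hs : P.head? = some s) (ht : P.getLast? = some t) (hh : h ∉ P)
    (hsh : G.Adj s h) (hth : G.Adj t h) : IsBiconnected G (insert h {z | z ∈ P}) := by
  have hsP : s ∈ P := List.mem_of_mem_head? hs
  have hPconn : (G.induce {z | z ∈ P}).Connected := by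
    rw [SimpleGraph.connected_iff_exists_forall_reachable]
    exact ⟨⟨s, hsP⟩, fun y => reachable_induce_of_isChain hP (fun _ => id) hsP y.2⟩
  refine ⟨connected_induce_insert hPconn hsP hsh.symm, ?_⟩
  rintro x (rfl | hx)
  · rw [Set.insert_sdiff_self_of_notMem (s := {z | z ∈ P}) hh]
    exact hPconn
  rw [SimpleGraph.connected_iff_exists_forall_reachable]
  have hhx : h ∈ insert h {z | z ∈ P} \ {x} :=
    ⟨Set.mem_insert _ _, fun hhx : h = x => hh (hhx ▸ hx)⟩
  refine ⟨⟨h, hhx⟩, ?_⟩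
  rintro ⟨y, hy⟩
  rcases hy with ⟨rfl | hyP, hyx⟩
  · rfl
  -- `x` cannot lie both before and after `y` on the path, so one of the two halves avoids it.
  suffices ∃ Q : List V, Q.IsChain G.Adj ∧ Q ⊆ P ∧ x ∉ Q ∧ y ∈ Q ∧ ∃ e ∈ Q, G.Adj e h by
    obtain ⟨Q, hQ, hQP, hxQ, hyQ, e, heQ, heh⟩ := this
    have hQS : ∀ z ∈ Q, z ∈ insert h {z | z ∈ P} \ {x} :=
      fun z hz => ⟨Set.mem_insert_of_mem _ (hQP hz), fun hzx : z = x => hxQ (hzx ▸ hz)⟩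
    have heh' : (G.induce (insert h {z | z ∈ P} \ {x})).Adj ⟨e, hQS e heQ⟩ ⟨h, hhx⟩ := heh
    exact ((reachable_induce_of_isChain hQ hQS heQ hyQ).symm.trans heh'.reachable).symm
  obtain ⟨A, B, rfl⟩ := List.append_of_mem hyP
  by_cases hxA : x ∈ A
  · refine ⟨y :: B, hP.right_of_append, by simp, fun hxB => ?_, List.mem_cons_self, t, ?_, hth⟩
    · exact List.disjoint_of_nodup_append hnd hxA hxB
    · rw [List.getLast?_append_of_ne_nil _ (List.cons_ne_nil _ _)] at ht
      exact List.mem_of_mem_getLast? ht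
  · refine ⟨A ++ [y], ?_, by simp, by simp [hxA, Ne.symm hyx], by simp, s, ?_, hsh⟩
    · exact List.IsChain.left_of_append (l₂ := B) (by simpa using hP)
    · rw [show A ++ y :: B = (A ++ [y]) ++ B by simp,
        List.head?_append_of_ne_nil _ (by simp)] at hs
      exact List.mem_of_mem_head? hs

lemma IsBlockGraph.isClique_of_isBiconnected [Finite V] (hG : IsBlockGraph G) {D : Set V}
    (hD : IsBiconnected G D) : G.IsClique D := by
  obtain ⟨S, hS, hmax⟩ := Set.Finite.exists_maximalFor id
    {S : Set V | D ⊆ S ∧ IsBiconnected G S} (Set.toFinite _) ⟨D, subset_rfl, hD⟩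
  refine (hG S hS.2 fun S' hSS' hS' => ?_).subset hS.1
  exact subset_antisymm hSS' (hmax ⟨hS.1.trans hSS', hS'⟩ hSS')

end Biconnected

lemma IsDirSeq.eraseIdx {E : V → V → Prop} {a b : V} {l : List V} (hl : IsDirSeq E a b l)
    {i : ℕ} (hi : i + 2 < l.length) (h : E l[i] l[i + 2]) :
    IsDirSeq E a b (l.eraseIdx (i + 1)) := by
  obtain ⟨hchain, hhead, hlast⟩ := hl
  rw [List.eraseIdx_eq_take_drop_succ]
  have htake : l.take (i + 1) ≠ [] := by rw [← List.length_pos_iff, List.length_take]; omega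
  have hdrop : l.drop (i + 2) ≠ [] := by rw [← List.length_pos_iff, List.length_drop]; omega
  refine ⟨List.isChain_append.mpr ⟨hchain.take _, hchain.drop _, ?_⟩, ?_, ?_⟩
  · simp [List.getLast?_take, List.head?_drop, List.getElem?_eq_getElem hi,
      List.getElem?_eq_getElem (show i < l.length by omega), h]
  · rwa [List.head?_append_of_ne_nil _ htake, List.head?_take, if_neg (by omega)]
  · rwa [List.getLast?_append_of_ne_nil _ hdrop, List.getLast?_drop, if_neg (by omega)]

lemma IsDirSeq.not_rel_of_length_le {E : V → V → Prop} {a b : V} {l : List V}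
    (hl : IsDirSeq E a b l) (hmin : ∀ l', IsDirSeq E a b l' → l.length ≤ l'.length) {i : ℕ}
    (hi : i + 2 < l.length) : ¬ E l[i] l[i + 2] := fun h => by
  have := hmin _ (hl.eraseIdx hi h)
  rw [List.length_eraseIdx_of_lt (by omega)] at this
  omega

theorem skeleton_adj_of_common_ancestor [Finite V] {E : V → V → Prop}
    (hacyc : ∀ v, ¬ TransGen E v v) (hblock : IsBlockGraph (skeleton E)) {u x₁ x₂ x₃ w : V}
    (hux : ReflTransGen E u x₁) (huw : ReflTransGen E u w) (h₁₂ : E x₁ x₂) (h₂₃ : E x₂ x₃)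
    (hw₂ : E w x₂) (hw₃ : E w x₃) : (skeleton E).Adj x₁ x₃ := by
  have hirr : ∀ v, ¬ E v v := fun v h => hacyc v (.single h)
  have hne : ∀ {z y v}, ReflTransGen E z y → TransGen E y v → z ≠ v :=
    fun hzy hyv hzv => hacyc _ (hzv ▸ TransGen.trans_right hzy hyv)
  set T : Set V := {z | z ≠ x₂ ∧ z ≠ x₃}
  have hT₁ : ∀ z, ReflTransGen E z x₁ → z ∈ T := fun z hz =>
    ⟨hne hz (.single h₁₂), hne hz ((TransGen.single h₁₂).tail h₂₃)⟩
  have hTw : ∀ z, ReflTransGen E z w → z ∈ T := fun z hz =>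
    ⟨hne hz (.single hw₂), hne hz (.single hw₃)⟩
  obtain ⟨p⟩ : ((skeleton E).induce T).Reachable ⟨x₁, hT₁ x₁ .refl⟩ ⟨w, hTw w .refl⟩ :=
    (reachable_induce_skeleton_of_reflTransGen hirr hux hT₁).symm.trans
      (reachable_induce_skeleton_of_reflTransGen hirr huw hTw)
  set q := p.bypass.map (SimpleGraph.Embedding.induce T).toHom
  have hqT : ∀ z ∈ q.support, z ∈ T := by
    intro z hz
    obtain ⟨z', -, rfl⟩ := List.mem_map.mp ((SimpleGraph.Walk.support_map _ _) ▸ hz)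
    exact z'.2
  have hcycle : IsBiconnected (skeleton E) (insert x₂ {z | z ∈ q.support}) :=
    isBiconnected_insert_of_isChain q.isChain_adj_support
      (p.bypass_isPath.map Subtype.val_injective).support_nodup
      (by rw [← q.cons_tail_support]; rfl)
      (by rw [List.getLast?_eq_some_getLast q.support_ne_nil, q.getLast_support]; rfl)
      (fun h => (hqT x₂ h).1 rfl)
      (skeleton_adj_of_rel hirr h₁₂) (skeleton_adj_of_rel hirr hw₂)
  have hx₂w : x₂ ≠ w := (hne .refl (.single hw₂)).symm
  have hclique := hblock.isClique_of_isBiconnected <| hcycle.insert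
    (by rintro (h | h); exacts [hirr _ (h ▸ h₂₃), (hqT x₃ h).2 rfl])
    (Set.mem_insert _ _) (Set.mem_insert_of_mem _ q.end_mem_support) hx₂w
    (skeleton_adj_of_rel hirr h₂₃).symm (skeleton_adj_of_rel hirr hw₃).symm
  exact hclique (Set.mem_insert_of_mem _ (Set.mem_insert_of_mem _ q.start_mem_support))
    (Set.mem_insert _ _) (hne .refl ((TransGen.single h₁₂).tail h₂₃))

/-- In a ttt with unique source, every interior node of a (unique) shortest
directed path is the source of the maximal tournament it shares with the next
node on the path. -/
theorem stmt9 {V : Type u} [Fintype V] (E : V → V → Prop)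
    (httt : IsTTT E) (hsrc : ∃! u : V, ∀ w, ¬ E w u)
    (a b : V) (l : List V) (hl : IsDirSeq E a b l)
    (hmin : ∀ l' : List V, IsDirSeq E a b l' → l.length ≤ l'.length) :
    ∀ r, 1 ≤ r → ∀ hr2 : r + 1 < l.length,
      ∀ S : Set V, IsMaxClique (skeleton E) S →
        l[r]'(by omega) ∈ S → l[r + 1]'hr2 ∈ S →
        ∀ w ∈ S, ¬ E w (l[r]'(by omega)) := by
  obtain ⟨hacyc, -, hblock⟩ := httt
  obtain ⟨u, -, hu⟩ := hsrc
  intro r hr1 hr2 S hS _ hr1S w hwS hw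
  obtain ⟨s, rfl⟩ : ∃ s, r = s + 1 := ⟨r - 1, by omega⟩
  have h₁₂ := List.IsChain.getElem hl.1 s (by omega)
  have h₂₃ := List.IsChain.getElem hl.1 (s + 1) hr2
  have hw₃ : E w l[s + 1 + 1] := by
    have hw₃ne : w ≠ l[s + 1 + 1] := by
      rintro rfl
      exact hacyc _ ((TransGen.single hw).tail h₂₃)
    exact (hS.1 hwS hr1S hw₃ne).2.resolve_right
      fun h => hacyc _ (((TransGen.single h₂₃).tail h).tail hw)
  have hreach := reflTransGen_of_unique_source hacyc hu
  have hadj := skeleton_adj_of_common_ancestor hacyc hblock (hreach _) (hreach w) h₁₂ h₂₃ hw hw₃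
  rcases hadj.2 with h₁₃ | h₃₁
  · exact hl.not_rel_of_length_le hmin (by omega) h₁₃
  · exact hacyc _ (((TransGen.single h₁₂).tail h₂₃).tail h₃₁)
end

section
/- Let T be a ttt with unique source and Ū ⊂ V satisfying: every u ∈ Ū has at least two children and is the source of some tournament. If i ≠ j are nodes with Desc(i) ∩ U = Desc(j) ∩ U (where U = V \ Ū), then, after possibly swapping i and j: i ∈ Ū, desc(i) = Desc(j), pa(j) = {i}, and there exists a node u with i, j ∈ pa(u). -/
open scoped Classical

universe u

variable {V : Type u}

/-!
Sinks are observed, so the hypothesis makes `i` and `j` ancestors of a common sink. In a ttt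
with unique source the ancestors of any node are totally ordered: two parents of a node are
joined by a path through their ancestors, which closes up to a cycle through the node, and every
cycle of a block graph spans a clique. So we may assume that `i` is a proper ancestor of `j`.

By well-founded induction on `i`, the edge `i → j` is the only route from `i` to `j`: a child
`c ≠ j` of `i` above `j` would by induction be the unique parent of `j`, which is refuted by the
chord `i j` of the cycle `i → d ⇝ j ← c ← i` if some child `d` of `i` lies below `j`, and
otherwise by the two distinct children of the latent node `i`, both of which would be the unique
parent of `j`. Hence every other child of `i` is a child of `j`, and a second parent `q` of `j`
would be a parent of `i` adjacent to the whole maximal clique of which `i` is the source.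
-/

section

open Relation SimpleGraph

theorem wellFounded_of_not_transGen_self {α : Type*} [Finite α] {r : α → α → Prop}
    (h : ∀ a, ¬ TransGen r a a) : WellFounded r :=
  haveI : IsTrans α (TransGen r) := ⟨fun _ _ _ => TransGen.trans⟩
  haveI : Std.Irrefl (TransGen r) := ⟨h⟩
  (Finite.wellFounded_of_trans_of_irrefl (TransGen r)).mono fun _ _ => TransGen.single

theorem wellFounded_swap_of_not_transGen_self {α : Type*} [Finite α] {r : α → α → Prop}
    (h : ∀ a, ¬ TransGen r a a) : WellFounded (Function.swap r) :=
  wellFounded_of_not_transGen_self fun a ha => h a (transGen_swap.1 ha)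

theorem List.IsChain.connected_induce {G : SimpleGraph V} :
    ∀ {l : List V}, l.IsChain G.Adj → l ≠ [] → (G.induce {x | x ∈ l}).Connected
  | [a], _, _ => (Walk.nil : G.Walk a a).connected_induce_support
  | a :: b :: t, h, _ => by
    rw [List.isChain_cons_cons] at h
    have hsplit : {x | x ∈ a :: b :: t} = {x | x ∈ [a]} ∪ {x | x ∈ b :: t} := by
      ext x
      simp
    rw [hsplit]
    exact connected_induce_union (Walk.nil : G.Walk a a).connected_induce_support.preconnected
      (h.2.connected_induce (List.cons_ne_nil _ _)).preconnected
      (List.mem_singleton_self a) List.mem_cons_self h.1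

theorem Cycle.Chain.exists_isChain_cons {α : Type*} {r : α → α → Prop} {c : List α}
    (hc : Cycle.Chain r c) {u : α} (hu : u ∈ c) :
    ∃ rest, c ~r u :: rest ∧ (u :: (rest ++ [u])).IsChain r := by
  obtain ⟨l₁, l₂, rfl⟩ := List.append_of_mem hu
  have hrot : l₁ ++ u :: l₂ ~r u :: (l₂ ++ l₁) := by
    simpa using List.isRotated_append (l := l₁) (l' := u :: l₂)
  refine ⟨l₂ ++ l₁, hrot, ?_⟩
  rw [← Cycle.chain_coe_cons, ← Cycle.coe_eq_coe.2 hrot]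
  exact hc

theorem isBiconnected_of_cycleChain {G : SimpleGraph V} {c : List V} (hnd : c.Nodup)
    (hc : Cycle.Chain G.Adj c) (hne : c ≠ []) : IsBiconnected G {x | x ∈ c} := by
  have key : ∀ u ∈ c, ∃ rest, rest ≠ [] ∧ (u :: rest).IsChain G.Adj ∧ u ∉ rest ∧
      ∀ x, x ∈ c ↔ x = u ∨ x ∈ rest := by
    intro u hu
    obtain ⟨rest, hrot, hch⟩ := hc.exists_isChain_cons hu
    refine ⟨rest, ?_, ?_, (List.nodup_cons.1 (hrot.nodup_iff.1 hnd)).1,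
      fun x => by simpa using hrot.mem_iff (a := x)⟩
    · rintro rfl
      exact G.loopless.irrefl u (List.isChain_pair.1 hch)
    · rw [← List.cons_append] at hch
      exact hch.left_of_append
  refine ⟨?_, fun u hu => ?_⟩
  · obtain ⟨u, hu⟩ := List.exists_mem_of_ne_nil c hne
    obtain ⟨rest, -, hch, -, hmem⟩ := key u hu
    have hset : {x | x ∈ c} = {x | x ∈ u :: rest} := by
      ext x
      simp [hmem]
    rw [hset]
    exact hch.connected_induce (List.cons_ne_nil _ _)
  · obtain ⟨rest, hne, hch, hu', hmem⟩ := key u hu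
    have hset : {x | x ∈ c} \ {u} = {x | x ∈ rest} := by
      ext x
      simp only [Set.mem_sdiff, Set.mem_ofPred_eq, hmem, Set.mem_singleton_iff]
      grind
    rw [hset]
    exact hch.tail.connected_induce hne

theorem IsBlockGraph.isClique_of_cycleChain [Finite V] {G : SimpleGraph V}
    (hG : IsBlockGraph G) {c : List V} (hnd : c.Nodup) (hc : Cycle.Chain G.Adj c) :
    G.IsClique {x | x ∈ c} := by
  rcases eq_or_ne c [] with rfl | hne
  · simp
  obtain ⟨T, hcT, hT⟩ := Finite.exists_le_maximal (isBiconnected_of_cycleChain hnd hc hne)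
  exact (hG T hT.prop fun T' hTT' hT' => hT.eq_of_le hT' hTT').subset hcT

theorem IsBlockGraph.adj_of_isPath [Finite V] {G : SimpleGraph V} (hG : IsBlockGraph G)
    {v p q : V} {W : G.Walk p q} (hW : W.IsPath) (hv : v ∉ W.support) (hvp : G.Adj v p)
    (hvq : G.Adj v q) (hpq : p ≠ q) : G.Adj p q := by
  have hnd : (v :: W.support).Nodup := List.nodup_cons.2 ⟨hv, hW.support_nodup⟩
  have hc : Cycle.Chain G.Adj (v :: W.support) := by
    simpa using (Walk.cons hvp (W.concat hvq.symm)).isChain_adj_support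
  exact hG.isClique_of_cycleChain hnd hc (List.mem_cons_of_mem _ W.start_mem_support)
    (List.mem_cons_of_mem _ W.end_mem_support) hpq

section DAG

variable {E : V → V → Prop}

theorem skeleton_adj_of_edge (hac : ∀ v, ¬ TransGen E v v) {a b : V} (h : E a b) :
    (skeleton E).Adj a b :=
  ⟨fun hab => hac a (.single (hab ▸ h)), Or.inl h⟩

theorem edge_of_skeleton_adj (hac : ∀ v, ¬ TransGen E v v) {a b : V}
    (h : (skeleton E).Adj a b) (hab : ReflTransGen E a b) : E a b :=
  h.2.resolve_right fun hba => hac b (TransGen.head' hba hab)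

theorem exists_isPath_of_reflTransGen (hac : ∀ v, ¬ TransGen E v v) {a b : V}
    (h : ReflTransGen E a b) : ∃ W : (skeleton E).Walk a b, W.IsPath ∧
      ∀ x ∈ W.support, ReflTransGen E a x ∧ ReflTransGen E x b := by
  induction h using ReflTransGen.head_induction_on with
  | refl => exact ⟨.nil, .nil, by simp [ReflTransGen.refl]⟩
  | @head a c hac' hcb ih =>
    obtain ⟨W, hW, hsupp⟩ := ih
    refine ⟨.cons (skeleton_adj_of_edge hac hac') W,
      hW.cons fun ha => hac a (TransGen.head' hac' (hsupp a ha).1), ?_⟩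
    simp only [Walk.support_cons, List.mem_cons, forall_eq_or_imp]
    exact ⟨⟨.refl, .head hac' hcb⟩, fun x hx => ⟨.head hac' (hsupp x hx).1, (hsupp x hx).2⟩⟩

theorem edge_of_forall_eq {y j : V} (hyj : TransGen E y j)
    (hstep : ∀ c, E y c → ReflTransGen E c j → c = j) : E y j := by
  obtain ⟨c, hyc, hcj⟩ := TransGen.head'_iff.1 hyj
  exact hstep c hyc hcj ▸ hyc

variable [Finite V]

theorem exists_forall_reflTransGen_of_existsUnique_source (hac : ∀ v, ¬ TransGen E v v)
    (hsrc : ∃! s, ∀ w, ¬ E w s) : ∃ s, ∀ v, ReflTransGen E s v := by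
  obtain ⟨s, -, hs⟩ := hsrc
  refine ⟨s, fun v => ?_⟩
  obtain ⟨a, hav, hmin⟩ :=
    (wellFounded_of_not_transGen_self hac).has_min {a | ReflTransGen E a v} ⟨v, .refl⟩
  exact hs a (fun w hw => hmin w (.head hw hav) hw) ▸ hav

theorem exists_sink (hac : ∀ v, ¬ TransGen E v v) (v : V) :
    ∃ t, ReflTransGen E v t ∧ ∀ w, ¬ E t w := by
  obtain ⟨t, hvt, hmin⟩ :=
    (wellFounded_swap_of_not_transGen_self hac).has_min {t | ReflTransGen E v t} ⟨v, .refl⟩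
  exact ⟨t, hvt, fun w hw => hmin w (hvt.tail hw) hw⟩

theorem edge_of_edge_of_edge_of_transGen (hac : ∀ v, ¬ TransGen E v v)
    (hbg : IsBlockGraph (skeleton E)) {y a b : V} (hya : E y a) (hyb : E y b)
    (hab : TransGen E a b) : E a b := by
  obtain ⟨W, hW, hWa⟩ := exists_isPath_of_reflTransGen hac hab.to_reflTransGen
  refine edge_of_skeleton_adj hac (hbg.adj_of_isPath hW ?_ (skeleton_adj_of_edge hac hya)
    (skeleton_adj_of_edge hac hyb) fun h => hac a (h ▸ hab)) hab.to_reflTransGen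
  exact fun hy => hac y (TransGen.head' hya (hWa y hy).1)

variable (hac : ∀ v, ¬ TransGen E v v) (hsrc : ∃! s, ∀ w, ¬ E w s)
  (hbg : IsBlockGraph (skeleton E))
include hac hsrc hbg

theorem skeleton_adj_of_edge_of_edge {p q w : V} (hp : E p w) (hq : E q w) (hpq : p ≠ q) :
    (skeleton E).Adj p q := by
  classical
  obtain ⟨s, hs⟩ := exists_forall_reflTransGen_of_existsUnique_source hac hsrc
  obtain ⟨Wp, -, hWp⟩ := exists_isPath_of_reflTransGen hac (hs p)
  obtain ⟨Wq, -, hWq⟩ := exists_isPath_of_reflTransGen hac (hs q)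
  refine hbg.adj_of_isPath (Wp.reverse.append Wq).bypass_isPath (fun hw => ?_)
    (skeleton_adj_of_edge hac hp).symm (skeleton_adj_of_edge hac hq).symm hpq
  rcases (Walk.mem_support_append_iff _ _).1 (Walk.support_bypass_subset_support _ hw) with h | h
  · exact hac w (TransGen.tail' (hWp w (by simpa [Walk.support_reverse] using h)).2 hp)
  · exact hac w (TransGen.tail' (hWq w h).2 hq)

theorem reflTransGen_total_of_reflTransGen (w : V) : ∀ {a b : V}, ReflTransGen E a w →
    ReflTransGen E b w → ReflTransGen E a b ∨ ReflTransGen E b a := by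
  induction w using (wellFounded_of_not_transGen_self hac).induction with
  | _ w ih =>
  intro a b ha hb
  rcases ha.cases_tail with rfl | ⟨p, hap, hpw⟩
  · exact Or.inr hb
  rcases hb.cases_tail with rfl | ⟨q, hbq, hqw⟩
  · exact Or.inl ha
  rcases eq_or_ne p q with rfl | hpq
  · exact ih p hpw hap hbq
  rcases (skeleton_adj_of_edge_of_edge hac hsrc hbg hpw hqw hpq).2 with hpq' | hqp'
  · exact ih q hqw (hap.tail hpq') hbq
  · exact ih p hpw hap (hbq.tail hqp')

end DAG

section Latent

variable {E : V → V → Prop} {Ubar : Set V}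

theorem mem_of_transGen_of_subset (hac : ∀ v, ¬ TransGen E v v) {y j : V}
    (hyj : TransGen E y j)
    (hsub : {w | ReflTransGen E y w} ∩ Ubarᶜ ⊆ {w | ReflTransGen E j w}) : y ∈ Ubar :=
  by_contra fun hy => hac y (hyj.trans_left (hsub ⟨.refl, hy⟩))

variable [Finite V] (hac : ∀ v, ¬ TransGen E v v) (hsrc : ∃! s, ∀ w, ¬ E w s)
  (hbg : IsBlockGraph (skeleton E)) (hI1 : ∀ u ∈ Ubar, ∃ a b, a ≠ b ∧ E u a ∧ E u b)
include hac hsrc hbg hI1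

/-- Sinks are observed, and a sink below `w` is also below `j`. -/
theorem reflTransGen_or_of_subset {y j w : V}
    (hsub : {w | ReflTransGen E y w} ∩ Ubarᶜ ⊆ {w | ReflTransGen E j w})
    (hyw : ReflTransGen E y w) : ReflTransGen E j w ∨ ReflTransGen E w j := by
  obtain ⟨t, hwt, hsink⟩ := exists_sink hac w
  have ht : t ∉ Ubar := fun ht => let ⟨a, _, _, ha, _⟩ := hI1 t ht; hsink a ha
  exact reflTransGen_total_of_reflTransGen hac hsrc hbg t (hsub ⟨hyw.trans hwt, ht⟩) hwt

theorem eq_of_edge_of_reflTransGen_of_parents {y j : V} (hyj : TransGen E y j)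
    (hsub : {w | ReflTransGen E y w} ∩ Ubarᶜ ⊆ {w | ReflTransGen E j w})
    (ih : ∀ c, E y c → TransGen E c j → ∀ w, E w j ↔ w = c)
    {c : V} (hyc : E y c) (hcj : ReflTransGen E c j) : c = j := by
  by_contra hne
  have hcj' : TransGen E c j :=
    (reflTransGen_iff_eq_or_transGen.1 hcj).resolve_left (Ne.symm hne)
  have hpa := ih c hyc hcj'
  by_cases hd : ∃ d, E y d ∧ ReflTransGen E j d
  · obtain ⟨d, hyd, hjd⟩ := hd
    obtain ⟨W, hW, hWj⟩ := exists_isPath_of_reflTransGen hac hjd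
    have hWy : y ∉ W.support := fun hy => hac y (hyj.trans_left (hWj y hy).1)
    have hWc : c ∉ W.support := fun hc => hac c (hcj'.trans_left (hWj c hc).1)
    -- the cycle `y → d ⇝ j ← c ← y` has the chord `y j`
    have hadj : (skeleton E).Adj y j := by
      refine hbg.adj_of_isPath (v := c) (W := .cons (skeleton_adj_of_edge hac hyd) W.reverse)
        (hW.reverse.cons (by simpa [Walk.support_reverse] using hWy)) ?_
        (skeleton_adj_of_edge hac hyc).symm (skeleton_adj_of_edge hac ((hpa c).2 rfl))
        fun h => hac y (h ▸ hyj)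
      simpa [Walk.support_reverse] using ⟨(skeleton_adj_of_edge hac hyc).ne.symm, hWc⟩
    have hyc' : y = c := (hpa y).1 (edge_of_skeleton_adj hac hadj hyj.to_reflTransGen)
    exact hac y (.single (hyc' ▸ hyc))
  · push Not at hd
    have hchild : ∀ d, E y d → TransGen E d j := fun d hyd =>
      have hdj := (reflTransGen_or_of_subset hac hsrc hbg hI1 hsub (.single hyd)).resolve_left
        (hd d hyd)
      (reflTransGen_iff_eq_or_transGen.1 hdj).resolve_left fun h => hd d hyd (h ▸ .refl)
    obtain ⟨a, b, hab, hya, hyb⟩ := hI1 y (mem_of_transGen_of_subset hac hyj hsub)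
    exact hab ((ih a hya (hchild a hya) b).1 ((ih b hyb (hchild b hyb) b).2 rfl)).symm

theorem transGen_of_edge_of_ne {y j : V}
    (hsub : {w | ReflTransGen E y w} ∩ Ubarᶜ ⊆ {w | ReflTransGen E j w})
    (hstep : ∀ c, E y c → ReflTransGen E c j → c = j) {c : V} (hyc : E y c) (hcj : c ≠ j) :
    TransGen E j c := by
  have hjc := (reflTransGen_or_of_subset hac hsrc hbg hI1 hsub (.single hyc)).resolve_right
    fun h => hcj (hstep c hyc h)
  exact (reflTransGen_iff_eq_or_transGen.1 hjc).resolve_left hcj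

variable (hI2 : ∀ u ∈ Ubar, ∃ S : Set V, IsMaxClique (skeleton E) S ∧ u ∈ S ∧ ∀ w ∈ S, ¬ E w u)
include hI2

theorem edge_iff_eq_of_forall_eq {y j : V} (hyj : TransGen E y j)
    (hsub : {w | ReflTransGen E y w} ∩ Ubarᶜ ⊆ {w | ReflTransGen E j w})
    (hstep : ∀ c, E y c → ReflTransGen E c j → c = j) (q : V) : E q j ↔ q = y := by
  have hadj {a b : V} : E a b → (skeleton E).Adj a b := skeleton_adj_of_edge hac
  have hyjE := edge_of_forall_eq hyj hstep
  refine ⟨fun hqj => ?_, fun h => h ▸ hyjE⟩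
  by_contra hqy
  have hqyE : E q y := (skeleton_adj_of_edge_of_edge hac hsrc hbg hqj hyjE hqy).2.resolve_right
    fun hyq => (hadj hqj).ne (hstep q hyq (.single hqj))
  obtain ⟨S, hS, hyS, hSsrc⟩ := hI2 y (mem_of_transGen_of_subset hac hyj hsub)
  suffices hclique : (skeleton E).IsClique (insert q S) from
    hSsrc q (hS.2 _ hclique (Set.subset_insert _ _) ▸ Set.mem_insert q S) hqyE
  refine hS.1.insert fun c hcS hqc => ?_
  by_cases hcy : c = y
  · exact hcy ▸ hadj hqyE
  have hyc : E y c := (hS.1 hyS hcS (Ne.symm hcy)).2.resolve_right (hSsrc c hcS)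
  by_cases hcj : c = j
  · exact hcj ▸ hadj hqj
  have hjc := edge_of_edge_of_edge_of_transGen hac hbg hyjE hyc
    (transGen_of_edge_of_ne hac hsrc hbg hI1 hsub hstep hyc hcj)
  -- the cycle `q → j → c ← y ← q` has the chord `q c`
  refine hbg.adj_of_isPath (v := y) (W := .cons (hadj hqj) (.cons (hadj hjc) .nil)) ?_ ?_
    (hadj hqyE).symm (hadj hyc) hqc
  · simp [Walk.cons_isPath_iff, (hadj hqj).ne, hqc, (hadj hjc).ne]
  · simp [Ne.symm hqy, (hadj hyjE).ne, (hadj hyc).ne]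

theorem eq_of_edge_of_reflTransGen (y : V) :
    ∀ {j : V}, TransGen E y j →
      {w | ReflTransGen E y w} ∩ Ubarᶜ ⊆ {w | ReflTransGen E j w} →
      ∀ c, E y c → ReflTransGen E c j → c = j := by
  induction y using (wellFounded_swap_of_not_transGen_self hac).induction with
  | _ y ih =>
  intro j hyj hsub
  refine fun c => eq_of_edge_of_reflTransGen_of_parents hac hsrc hbg hI1 hyj hsub
    fun c hyc hcj => ?_
  have hsubc : {w | ReflTransGen E c w} ∩ Ubarᶜ ⊆ {w | ReflTransGen E j w} :=
    (Set.inter_subset_inter_left _ fun w hw => ReflTransGen.head hyc hw).trans hsub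
  exact edge_iff_eq_of_forall_eq hac hsrc hbg hI1 hI2 hcj hsubc (ih c hyc hcj hsubc)

theorem latent_of_transGen_of_subset {y j : V}
    (hyj : TransGen E y j)
    (hsub : {w | ReflTransGen E y w} ∩ Ubarᶜ ⊆ {w | ReflTransGen E j w}) :
    y ∈ Ubar ∧ {w | TransGen E y w} = {w | ReflTransGen E j w} ∧ (∀ w, E w j ↔ w = y) ∧
      ∃ u, E y u ∧ E j u := by
  have hstep := eq_of_edge_of_reflTransGen hac hsrc hbg hI1 hI2 y hyj hsub
  have hyjE := edge_of_forall_eq hyj hstep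
  have hyU := mem_of_transGen_of_subset hac hyj hsub
  have hchild : ∀ c, E y c → c ≠ j → E j c := fun c hyc hcj =>
    edge_of_edge_of_edge_of_transGen hac hbg hyjE hyc
      (transGen_of_edge_of_ne hac hsrc hbg hI1 hsub hstep hyc hcj)
  refine ⟨hyU, ?_, edge_iff_eq_of_forall_eq hac hsrc hbg hI1 hI2 hyj hsub hstep, ?_⟩
  · ext w
    refine ⟨fun hyw => ?_, TransGen.head' hyjE⟩
    obtain ⟨c, hyc, hcw⟩ := TransGen.head'_iff.1 hyw
    rcases eq_or_ne c j with rfl | hcj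
    · exact hcw
    · exact .head (hchild c hyc hcj) hcw
  · obtain ⟨a, b, hab, hya, hyb⟩ := hI1 y hyU
    rcases eq_or_ne a j with rfl | haj
    · exact ⟨b, hyb, hchild b hyb (Ne.symm hab)⟩
    · exact ⟨a, hya, hchild a hya haj⟩

end Latent

end

/-- In a ttt with unique source whose latent nodes `Ū` satisfy (I1)-(I2): if
`Desc(i) ∩ U = Desc(j) ∩ U` for distinct `i, j`, then (after possibly swapping
`i` and `j`) `i ∈ Ū`, `desc(i) = Desc(j)`, `pa(j) = {i}`, and `i, j` have a
common child. -/
theorem stmt18 {V : Type u} [Fintype V] (E : V → V → Prop)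
    (httt : IsTTT E) (hsrc : ∃! u : V, ∀ w, ¬ E w u)
    (Ubar : Set V)
    (hI1 : ∀ u ∈ Ubar, ∃ a b : V, a ≠ b ∧ E u a ∧ E u b)
    (hI2 : ∀ u ∈ Ubar, ∃ S : Set V, IsMaxClique (skeleton E) S ∧ u ∈ S ∧
      ∀ w ∈ S, ¬ E w u)
    (i j : V) (hij : i ≠ j)
    (hD : {w | Relation.ReflTransGen E i w} ∩ Ubarᶜ =
          {w | Relation.ReflTransGen E j w} ∩ Ubarᶜ) :
    (i ∈ Ubar ∧ {w | Relation.TransGen E i w} = {w | Relation.ReflTransGen E j w} ∧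
      (∀ w, E w j ↔ w = i) ∧ ∃ u : V, E i u ∧ E j u) ∨
    (j ∈ Ubar ∧ {w | Relation.TransGen E j w} = {w | Relation.ReflTransGen E i w} ∧
      (∀ w, E w i ↔ w = j) ∧ ∃ u : V, E j u ∧ E i u) := by
  obtain ⟨hac, -, hbg⟩ := httt
  have hsubij : {w | Relation.ReflTransGen E i w} ∩ Ubarᶜ ⊆ {w | Relation.ReflTransGen E j w} :=
    hD ▸ Set.inter_subset_left
  have hsubji : {w | Relation.ReflTransGen E j w} ∩ Ubarᶜ ⊆ {w | Relation.ReflTransGen E i w} :=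
    hD ▸ Set.inter_subset_left
  rcases reflTransGen_or_of_subset hac hsrc hbg hI1 hsubij .refl with hji | hij'
  · exact .inr <| latent_of_transGen_of_subset hac hsrc hbg hI1 hI2
      ((Relation.reflTransGen_iff_eq_or_transGen.1 hji).resolve_left hij) hsubji
  · exact .inl <| latent_of_transGen_of_subset hac hsrc hbg hI1 hI2
      ((Relation.reflTransGen_iff_eq_or_transGen.1 hij').resolve_left (Ne.symm hij)) hsubij
end
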